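/- Let H(x,y) = y²/2 + x²/2 − x⁴/4. Then (−3xy)·(−3xy·dH + d(xy³)) = (8x²y² − 4H·x² + x² + y²)·dH + dR for some polynomial R(x,y), where H is substituted by its polynomial expression. -/

import Mathlib

noncomputable def pdx (F : ℝ → ℝ → ℝ) (x y : ℝ) : ℝ := deriv (fun t => F t y) x
noncomputable def pdy (F : ℝ → ℝ → ℝ) (x y : ℝ) : ℝ := deriv (fun t => F x t) y

noncomputable def H (x y : ℝ) : ℝ := y^2/2 + x^2/2 - x^4/4

/-- evaluation at (x,y) of the partial derivative ∂R/∂x of a real polynomial R(x,y) -/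
noncomputable def Rx (R : MvPolynomial (Fin 2) ℝ) (x y : ℝ) : ℝ :=
  MvPolynomial.eval ![x, y] (MvPolynomial.pderiv 0 R)

/-- evaluation at (x,y) of the partial derivative ∂R/∂y of a real polynomial R(x,y) -/
noncomputable def Ry (R : MvPolynomial (Fin 2) ℝ) (x y : ℝ) : ℝ :=
  MvPolynomial.eval ![x, y] (MvPolynomial.pderiv 1 R)

/-! The `dy`-coefficient of `-3xy·dH + d(xy³)` is `-3xy·y + 3xy² = 0`, so `R` must satisfy
`∂R/∂y = -(8x²y² - 4Hx² + x² + y²)·y`. Integrating in `y` determines `R` up to a polynomial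
in `x`, which is then read off from the `dx`-coefficient. -/

lemma pdx_H (x y : ℝ) : pdx H x y = x - x ^ 3 := by
  unfold pdx H
  rw [deriv_fun_sub (by fun_prop) (by fun_prop)]
  simp

lemma pdy_H (x y : ℝ) : pdy H x y = y := by
  simp [pdy, H]

lemma pdx_mul_pow (n : ℕ) (x y : ℝ) : pdx (fun x y => x * y ^ n) x y = y ^ n := by
  simp [pdx]

lemma pdy_mul_pow (n : ℕ) (x y : ℝ) :
    pdy (fun x y => x * y ^ n) x y = n * x * y ^ (n - 1) := by
  rw [pdy, ((hasDerivAt_pow n y).const_mul x).deriv]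
  ring

section PolynomialPartials

open MvPolynomial

lemma Rx_add (P Q : MvPolynomial (Fin 2) ℝ) (x y : ℝ) : Rx (P + Q) x y = Rx P x y + Rx Q x y := by
  simp only [Rx, map_add]

lemma Ry_add (P Q : MvPolynomial (Fin 2) ℝ) (x y : ℝ) : Ry (P + Q) x y = Ry P x y + Ry Q x y := by
  simp only [Ry, map_add]

lemma Rx_C_mul_X_pow_mul_X_pow (c : ℝ) (m n : ℕ) (x y : ℝ) :
    Rx (C c * X 0 ^ m * X 1 ^ n) x y = c * m * x ^ (m - 1) * y ^ n := by
  simp only [Rx, Derivation.leibniz, Derivation.leibniz_pow, derivation_C, pderiv_X, Pi.single_eq_same,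
    Pi.single_eq_of_ne (by decide : (1 : Fin 2) ≠ 0), smul_eq_mul, nsmul_eq_mul, map_add, map_mul, map_pow,
    map_one, map_zero, map_natCast, eval_X, eval_C, Matrix.cons_val_zero, Matrix.cons_val_one,
    Matrix.cons_val_fin_one]
  ring

lemma Ry_C_mul_X_pow_mul_X_pow (c : ℝ) (m n : ℕ) (x y : ℝ) :
    Ry (C c * X 0 ^ m * X 1 ^ n) x y = c * n * x ^ m * y ^ (n - 1) := by
  simp only [Ry, Derivation.leibniz, Derivation.leibniz_pow, derivation_C, pderiv_X, Pi.single_eq_same,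
    Pi.single_eq_of_ne (by decide : (0 : Fin 2) ≠ 1), smul_eq_mul, nsmul_eq_mul, map_add, map_mul, map_pow,
    map_one, map_zero, map_natCast, eval_X, eval_C, Matrix.cons_val_zero, Matrix.cons_val_one,
    Matrix.cons_val_fin_one]
  ring

-- The padding `C 1`, `X 0 ^ 0`, `X 1 ^ 0` puts every term in the shape `C c * X 0 ^ m * X 1 ^ n`.
noncomputable def exactPart : MvPolynomial (Fin 2) ℝ :=
  C (-3/2) * X 0 ^ 2 * X 1 ^ 4 + C 1 * X 0 ^ 4 * X 1 ^ 2 + C (-1/2) * X 0 ^ 6 * X 1 ^ 2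
    + C (-1/2) * X 0 ^ 2 * X 1 ^ 2 + C (-1/4) * X 0 ^ 0 * X 1 ^ 4
    + C (-3/8) * X 0 ^ 8 * X 1 ^ 0 + C (1/10) * X 0 ^ 10 * X 1 ^ 0
    + C (-1/4) * X 0 ^ 4 * X 1 ^ 0 + C (1/2) * X 0 ^ 6 * X 1 ^ 0

end PolynomialPartials

/-- Lemma 2(a), truncated pendulum: (−3xy)·(−3xy·dH + d(xy³)) = (8x²y² − 4Hx² + x² + y²)·dH + dR -/
theorem rel_exact : ∃ R : MvPolynomial (Fin 2) ℝ, ∀ x y : ℝ,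
    (-3*x*y) * ((-3*x*y) * pdx H x y + pdx (fun x y => x * y^3) x y)
      = (8*x^2*y^2 - 4 * H x y * x^2 + x^2 + y^2) * pdx H x y + Rx R x y
  ∧ (-3*x*y) * ((-3*x*y) * pdy H x y + pdy (fun x y => x * y^3) x y)
      = (8*x^2*y^2 - 4 * H x y * x^2 + x^2 + y^2) * pdy H x y + Ry R x y := by
  refine ⟨exactPart, fun x y => ⟨?_, ?_⟩⟩
  · rw [pdx_H, pdx_mul_pow]
    simp only [exactPart, Rx_add, Rx_C_mul_X_pow_mul_X_pow, H, Nat.cast_ofNat, Nat.reduceSub]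
    ring
  · rw [pdy_H, pdy_mul_pow]
    simp only [exactPart, Ry_add, Ry_C_mul_X_pow_mul_X_pow, H, Nat.cast_ofNat, Nat.reduceSub]
    ring
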